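/- Let k be a field with char k ≠ 2, d a positive integer, and M a nonzero d×d matrix over k. Then ō(M) is the internal direct sum of the Lie subalgebra o(M) and the one-dimensional central subalgebra k·I_d spanned by the identity matrix: every X ∈ ō(M) can be written uniquely as X = Y + λ·I_d with Y ∈ o(M) and λ ∈ k. Moreover the derived subalgebras coincide: [ō(M), ō(M)] = [o(M), o(M)]. -/

import Mathlib

open Matrix LieAlgebra

attribute [local instance 100] LieRing.ofAssociativeRing

/-- The Lie algebra `o(M) = {X ∈ gl | Xᵀ * M + M * X = 0}` of matrices preserving the
bilinear form with Gram matrix `M`. -/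
def lieO (k : Type) [Field k] {ι : Type} [Fintype ι] [DecidableEq ι]
    (M : Matrix ι ι k) : LieSubalgebra k (Matrix ι ι k) where
  carrier := {X | Xᵀ * M + M * X = 0}
  zero_mem' := by simp
  add_mem' := by
    intro X Y hX hY
    simp only [Set.mem_setOf_eq] at *
    rw [Matrix.transpose_add, Matrix.add_mul, Matrix.mul_add, add_add_add_comm, hX, hY, add_zero]
  smul_mem' := by
    intro c X hX
    simp only [Set.mem_setOf_eq] at *
    rw [Matrix.transpose_smul, Matrix.smul_mul, Matrix.mul_smul, ← smul_add, hX, smul_zero]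
  lie_mem' := by
    intro X Y hX hY
    simp only [Set.mem_setOf_eq] at *
    have hX' : Xᵀ * M = -(M * X) := eq_neg_of_add_eq_zero_left hX
    have hY' : Yᵀ * M = -(M * Y) := eq_neg_of_add_eq_zero_left hY
    have h1 : Yᵀ * Xᵀ * M = M * Y * X := by
      rw [mul_assoc, hX', mul_neg, ← mul_assoc, hY', neg_mul, neg_neg]
    have h2 : Xᵀ * Yᵀ * M = M * X * Y := by
      rw [mul_assoc, hY', mul_neg, ← mul_assoc, hX', neg_mul, neg_neg]
    simp only [Ring.lie_def, Matrix.transpose_sub, Matrix.transpose_mul, Matrix.sub_mul,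
      Matrix.mul_sub]
    rw [h1, h2, ← mul_assoc M X Y, ← mul_assoc M Y X]
    abel

/-- `ō(M)`: the space of matrices `X` with `Xᵀ * M + M * X` in the linear span of `M`. -/
def lieOBar (k : Type) [Field k] {ι : Type} [Fintype ι] [DecidableEq ι]
    (M : Matrix ι ι k) : Submodule k (Matrix ι ι k) where
  carrier := {X | ∃ c : k, Xᵀ * M + M * X = c • M}
  zero_mem' := ⟨0, by simp⟩
  add_mem' := by
    rintro X Y ⟨a, ha⟩ ⟨b, hb⟩
    exact ⟨a + b, by
      rw [Matrix.transpose_add, Matrix.add_mul, Matrix.mul_add, add_add_add_comm, ha, hb,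
        add_smul]⟩
  smul_mem' := by
    rintro c X ⟨a, ha⟩
    exact ⟨c * a, by
      rw [Matrix.transpose_smul, Matrix.smul_mul, Matrix.mul_smul, ← smul_add, ha, smul_smul]⟩

/-!
Since `(c • 1)ᵀ * M + M * (c • 1) = (2 * c) • M`, adding `c • 1` to `X` shifts the defect
`Xᵀ * M + M * X` by `(2 * c) • M`. When `2` is invertible, every `X ∈ ō(M)` can therefore be
corrected by a scalar matrix into `o(M)`, and when `M ≠ 0` no nonzero scalar matrix lies in
`o(M)`, which gives uniqueness. Scalar matrices are central, so brackets in `ō(M)` are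
brackets of the `o(M)`-components.
-/

theorem Matrix.transpose_add_smul_one_mul_add_mul_add_smul_one {R ι : Type*} [CommRing R]
    [Fintype ι] [DecidableEq ι] (M Y : Matrix ι ι R) (c : R) :
    (Y + c • 1)ᵀ * M + M * (Y + c • 1) = (Yᵀ * M + M * Y) + (2 * c) • M := by
  simp only [transpose_add, transpose_smul, transpose_one, add_mul, mul_add, Matrix.smul_mul,
    Matrix.mul_smul, one_mul, mul_one, two_mul, add_smul]
  abel

theorem lie_add_smul_one_add_smul_one {R A : Type*} [CommRing R] [Ring A] [Algebra R A]
    (X Y : A) (a b : R) : ⁅X + a • (1 : A), Y + b • (1 : A)⁆ = ⁅X, Y⁆ := by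
  simp only [Ring.lie_def, add_mul, mul_add, smul_mul_assoc, mul_smul_comm, one_mul, mul_one]
  module

section

variable {k ι : Type} [Field k] [Fintype ι] [DecidableEq ι] {M : Matrix ι ι k}

theorem mem_lieO_iff {X : Matrix ι ι k} : X ∈ lieO k M ↔ Xᵀ * M + M * X = 0 :=
  Iff.rfl

theorem mem_lieOBar_of_mem_lieO {X : Matrix ι ι k} (hX : X ∈ lieO k M) : X ∈ lieOBar k M :=
  ⟨0, by rw [mem_lieO_iff.mp hX, zero_smul]⟩

theorem add_smul_one_mem_lieOBar {Y : Matrix ι ι k} (hY : Y ∈ lieO k M) (c : k) :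
    Y + c • (1 : Matrix ι ι k) ∈ lieOBar k M :=
  ⟨2 * c, by rw [transpose_add_smul_one_mul_add_mul_add_smul_one, mem_lieO_iff.mp hY, zero_add]⟩

theorem exists_mem_lieO_eq_add_smul_one (h2 : (2 : k) ≠ 0) {X : Matrix ι ι k}
    (hX : X ∈ lieOBar k M) : ∃ Y ∈ lieO k M, ∃ c : k, X = Y + c • (1 : Matrix ι ι k) := by
  obtain ⟨c, hc⟩ := hX
  refine ⟨X - (c / 2) • 1, ?_, c / 2, (sub_add_cancel _ _).symm⟩
  have h := transpose_add_smul_one_mul_add_mul_add_smul_one M (X - (c / 2) • 1) (c / 2)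
  rw [sub_add_cancel, hc, mul_div_cancel₀ c h2] at h
  exact right_eq_add.mp h

theorem eq_zero_of_smul_one_mem_lieO (h2 : (2 : k) ≠ 0) (hM : M ≠ 0) {c : k}
    (hc : c • (1 : Matrix ι ι k) ∈ lieO k M) : c = 0 := by
  have h := transpose_add_smul_one_mul_add_mul_add_smul_one M 0 c
  rw [zero_add, mem_lieO_iff.mp hc, transpose_zero, zero_mul, mul_zero, add_zero, zero_add,
    eq_comm, smul_eq_zero] at h
  simpa [h2, hM] using h

theorem eq_and_eq_of_add_smul_one_eq (h2 : (2 : k) ≠ 0) (hM : M ≠ 0) {Y Y' : Matrix ι ι k}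
    (hY : Y ∈ lieO k M) (hY' : Y' ∈ lieO k M) {c c' : k}
    (h : Y' + c' • (1 : Matrix ι ι k) = Y + c • 1) : Y' = Y ∧ c' = c := by
  have hc : c' - c = 0 := by
    refine eq_zero_of_smul_one_mem_lieO h2 hM ?_
    have : (c' - c) • (1 : Matrix ι ι k) = Y - Y' := by
      rw [sub_smul]
      linear_combination (norm := module) h
    exact this ▸ sub_mem hY hY'
  obtain rfl := sub_eq_zero.mp hc
  exact ⟨add_right_cancel h, rfl⟩

end

theorem lieOBar_eq_lieO_sup_scalar_of_charNeTwo_general (k : Type) [Field k] (hchar : ringChar k ≠ 2)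
    (d : ℕ) (M : Matrix (Fin d) (Fin d) k) (hM : M ≠ 0) :
    (∀ Y ∈ lieO k M, ∀ c : k, Y + c • (1 : Matrix (Fin d) (Fin d) k) ∈ lieOBar k M) ∧
    (∀ X ∈ lieOBar k M, ∃! p : Matrix (Fin d) (Fin d) k × k,
        p.1 ∈ lieO k M ∧ X = p.1 + p.2 • (1 : Matrix (Fin d) (Fin d) k)) ∧
    Submodule.span k {z : Matrix (Fin d) (Fin d) k |
        ∃ X ∈ lieOBar k M, ∃ Y ∈ lieOBar k M, z = ⁅X, Y⁆} =
      Submodule.span k {z : Matrix (Fin d) (Fin d) k |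
        ∃ X ∈ lieO k M, ∃ Y ∈ lieO k M, z = ⁅X, Y⁆} := by
  have h2 : (2 : k) ≠ 0 := Ring.two_ne_zero hchar
  refine ⟨fun Y hY c => add_smul_one_mem_lieOBar hY c, ?_, ?_⟩
  · intro X hX
    obtain ⟨Y, hY, c, rfl⟩ := exists_mem_lieO_eq_add_smul_one h2 hX
    refine ⟨(Y, c), ⟨hY, rfl⟩, ?_⟩
    rintro ⟨Y', c'⟩ ⟨hY', h⟩
    obtain ⟨rfl, rfl⟩ := eq_and_eq_of_add_smul_one_eq h2 hM hY hY' h.symm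
    rfl
  · congr 1
    ext z
    constructor
    · rintro ⟨X, hX, Y, hY, rfl⟩
      obtain ⟨X', hX', a, rfl⟩ := exists_mem_lieO_eq_add_smul_one h2 hX
      obtain ⟨Y', hY', b, rfl⟩ := exists_mem_lieO_eq_add_smul_one h2 hY
      exact ⟨X', hX', Y', hY', lie_add_smul_one_add_smul_one X' Y' a b⟩
    · rintro ⟨X, hX, Y, hY, rfl⟩
      exact ⟨X, mem_lieOBar_of_mem_lieO hX, Y, mem_lieOBar_of_mem_lieO hY, rfl⟩

/-- Let `char k ≠ 2` and `M ≠ 0` a `d × d` matrix.  Then `ō(M)` is the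
internal direct sum of `o(M)` and the line spanned by the identity matrix: every
`X ∈ ō(M)` is uniquely `Y + c • 1` with `Y ∈ o(M)` and `c ∈ k` (and conversely every such
sum lies in `ō(M)`).  Moreover the derived subalgebras (spans of brackets) coincide:
`[ō(M), ō(M)] = [o(M), o(M)]`. -/
theorem lieOBar_eq_lieO_sup_scalar_of_charNeTwo (k : Type) [Field k] (hchar : ringChar k ≠ 2)
    (d : ℕ) (hd : 0 < d) (M : Matrix (Fin d) (Fin d) k) (hM : M ≠ 0) :
    (∀ Y ∈ lieO k M, ∀ c : k, Y + c • (1 : Matrix (Fin d) (Fin d) k) ∈ lieOBar k M) ∧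
    (∀ X ∈ lieOBar k M, ∃! p : Matrix (Fin d) (Fin d) k × k,
        p.1 ∈ lieO k M ∧ X = p.1 + p.2 • (1 : Matrix (Fin d) (Fin d) k)) ∧
    Submodule.span k {z : Matrix (Fin d) (Fin d) k |
        ∃ X ∈ lieOBar k M, ∃ Y ∈ lieOBar k M, z = ⁅X, Y⁆} =
      Submodule.span k {z : Matrix (Fin d) (Fin d) k |
        ∃ X ∈ lieO k M, ∃ Y ∈ lieO k M, z = ⁅X, Y⁆} :=
  lieOBar_eq_lieO_sup_scalar_of_charNeTwo_general k hchar d M hM
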